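/- Let δ > 0 and let (g_m)_{m=1}^M be a finite sequence of reals. Define S_0 = δ² and S_m = δ² + ∑_{i=1}^m g_i². If additionally |g_m| ≤ δ for all m, then ∑_{m=1}^M (S_m − S_{m-1})/S_{m-1} ≤ 2·∑_{m=1}^M (ln S_m − ln S_{m-1}) = 2·ln(1 + (∑_{m=1}^M g_m²)/δ²). -/

import Mathlib

/-!
Since `g m ^ 2 ≤ δ ^ 2 ≤ S (m - 1)`, consecutive partial sums satisfy
`S (m - 1) ≤ S m ≤ 2 S (m - 1)`.
For `0 < a ≤ b ≤ 2a` the increment ratio is then controlled by the logarithm,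
`(b - a) / a ≤ 2 (b - a) / b ≤ 2 (log b - log a)`, and the logarithmic sum telescopes to
`2 log (S M / δ ^ 2)`.
-/

open Finset Real

theorem Finset.sum_Icc_one_sub_pred {G : Type*} [AddCommGroup G] (f : ℕ → G) (n : ℕ) :
    ∑ m ∈ Icc 1 n, (f m - f (m - 1)) = f n - f 0 := by
  induction n with
  | zero => simp
  | succ n ih =>
    rw [sum_Icc_succ_top (by omega), ih, Nat.add_sub_cancel]
    abel

theorem Real.sub_div_le_two_mul_log_sub_log {a b : ℝ} (ha : 0 < a) (hab : a ≤ b)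
    (hba : b ≤ 2 * a) : (b - a) / a ≤ 2 * (log b - log a) := by
  have hb : 0 < b := ha.trans_le hab
  calc (b - a) / a ≤ 2 * ((b - a) / b) := by
        rw [← mul_div_assoc, div_le_div_iff₀ ha hb]
        nlinarith
    _ = 2 * (1 - (b / a)⁻¹) := by field_simp
    _ ≤ 2 * log (b / a) := by gcongr; exact one_sub_inv_le_log_of_pos (by positivity)
    _ = 2 * (log b - log a) := by rw [log_div hb.ne' ha.ne']

theorem sum_Icc_sub_div_le_two_mul_sum_log_sub_log {S : ℕ → ℝ} (n : ℕ)
    (hpos : ∀ m, 0 < S m) (hmono : ∀ m ∈ Icc 1 n, S (m - 1) ≤ S m)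
    (hdouble : ∀ m ∈ Icc 1 n, S m ≤ 2 * S (m - 1)) :
    ∑ m ∈ Icc 1 n, (S m - S (m - 1)) / S (m - 1)
      ≤ 2 * ∑ m ∈ Icc 1 n, (log (S m) - log (S (m - 1))) := by
  rw [mul_sum]
  exact sum_le_sum fun m hm =>
    sub_div_le_two_mul_log_sub_log (hpos _) (hmono m hm) (hdouble m hm)

theorem stmt_3 (M : ℕ) (δ : ℝ) (hδ : 0 < δ) (g : ℕ → ℝ)
    (hg : ∀ m, |g m| ≤ δ)
    (S : ℕ → ℝ) (hS : ∀ m, S m = δ ^ 2 + ∑ i ∈ Finset.Icc 1 m, g i ^ 2) :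
    (∑ m ∈ Finset.Icc 1 M, (S m - S (m - 1)) / S (m - 1)
      ≤ 2 * ∑ m ∈ Finset.Icc 1 M, (Real.log (S m) - Real.log (S (m - 1)))) ∧
    (2 * ∑ m ∈ Finset.Icc 1 M, (Real.log (S m) - Real.log (S (m - 1)))
      = 2 * Real.log (1 + (∑ m ∈ Finset.Icc 1 M, g m ^ 2) / δ ^ 2)) := by
  have hδS : ∀ m, δ ^ 2 ≤ S m := fun m => by
    rw [hS]; exact le_add_of_nonneg_right (sum_nonneg fun i _ => sq_nonneg _)
  have hpos : ∀ m, 0 < S m := fun m => (pow_pos hδ 2).trans_le (hδS m)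
  have hstep : ∀ m ∈ Icc 1 M, S m = S (m - 1) + g m ^ 2 := by
    intro m hm
    obtain ⟨k, rfl⟩ := Nat.exists_eq_add_of_le' (mem_Icc.mp hm).1
    rw [hS, hS, sum_Icc_succ_top (by omega), Nat.add_sub_cancel, add_assoc]
  have hg_sq : ∀ m, g m ^ 2 ≤ δ ^ 2 := fun m =>
    sq_le_sq' (abs_le.mp (hg m)).1 (abs_le.mp (hg m)).2
  refine ⟨sum_Icc_sub_div_le_two_mul_sum_log_sub_log M hpos
    (fun m hm => by rw [hstep m hm]; exact le_add_of_nonneg_right (sq_nonneg _))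
    (fun m hm => by rw [hstep m hm]; linarith [hg_sq m, hδS (m - 1)]), ?_⟩
  rw [sum_Icc_one_sub_pred (fun m => log (S m)), ← log_div (hpos M).ne' (hpos 0).ne', hS, hS 0,
    Icc_eq_empty_of_lt zero_lt_one, sum_empty, add_zero, add_div, div_self (pow_pos hδ 2).ne']
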